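/- arXiv:2401.07986 — 2 statements merged into one kernel-verified Lean document; each statement's English description precedes it below -/
import Mathlib

section
/- Let q ≥ 3 be a prime power, r a prime dividing q−1, and ε ∈ (0,1/2). For all q larger than an explicit constant C(ε) = 6^{1/ε}, there exists an F_r-linear code of length q, dimension ⌊q^{1/2−ε}⌋, and minimum distance at least (r−1)q/r − 2q^{1−ε}. -/
/-! A random linear code works. For a nonzero message `v`, the map `W ↦ W v` on generator
matrices is a surjective linear map, so `W v` is uniformly distributed and a union bound over the
`r ^ k - 1` messages reduces the distance claim to `(r ^ k - 1) · |ball| < r ^ q`, where the ball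
consists of the words of weight at most `D = q - B`, `B = q / r + 2 q ^ (1 - ε)`. The exponential
moment bound `|ball| · t ^ B ≤ (t + r - 1) ^ q` finishes the proof for
`t = 1 + min 1 (r / q ^ ε)`, via `2u / (u + 2) ≤ log (1 + u)`. -/

open Finset Real Matrix

theorem AddMonoidHom.card_filter_mem_mul_card_of_surjective {G H : Type*} [AddGroup G]
    [Fintype G] [AddGroup H] [Fintype H] [DecidableEq H] (f : G →+ H)
    (hf : Function.Surjective f) (S : Finset H) :
    #{g | f g ∈ S} * Fintype.card H = #S * Fintype.card G := by
  have hfiber (y : H) : #{g | f g = y} = #{g | f g = 0} :=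
    AddMonoidHom.card_fiber_eq_of_mem_range f (hf y) (hf 0)
  have hS : #{g | f g ∈ S} = ∑ y ∈ S, #{g | f g = y} := by
    rw [card_eq_sum_card_fiberwise (f := f) (t := S) fun g hg => mem_coe.2 (mem_filter.1 hg).2]
    refine sum_congr rfl fun y hy => congrArg card (Finset.ext fun g => ?_)
    simp only [mem_filter, mem_univ, true_and]
    exact ⟨And.right, by rintro rfl; exact ⟨hy, rfl⟩⟩
  have huniv : Fintype.card G = ∑ y : H, #{g | f g = y} :=
    card_eq_sum_card_fiberwise fun g _ => mem_univ (f g)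
  simp only [hS, huniv, hfiber, sum_const, card_univ, smul_eq_mul]
  ring

theorem Matrix.mulVec_surjective_of_ne_zero {m n K : Type*} [Fintype n] [DecidableEq n] [Field K]
    {v : n → K} (hv : v ≠ 0) : Function.Surjective fun W : Matrix m n K => W *ᵥ v := by
  obtain ⟨j, hj⟩ := Function.ne_iff.1 hv
  intro x
  refine ⟨vecMulVec x (Pi.single j (v j)⁻¹), ?_⟩
  simp [vecMulVec_mulVec, single_dotProduct, inv_mul_cancel₀ hj]

theorem exists_submodule_finrank_eq_forall_notMem {K ι : Type*} [Field K] [Fintype K]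
    [Fintype ι] (k : ℕ) (S : Finset (ι → K)) (h0 : 0 ∈ S)
    (hS : (Fintype.card K ^ k - 1) * #S < Fintype.card K ^ Fintype.card ι) :
    ∃ C : Submodule K (ι → K), Module.finrank K C = k ∧
      ∀ c ∈ C, c ≠ 0 → c ∉ S := by
  classical
  set N := Fintype.card K ^ Fintype.card ι
  set bad : (Fin k → K) → Finset (Matrix ι (Fin k) K) := fun v => {W | W *ᵥ v ∈ S}
  have hcard : Fintype.card (Matrix ι (Fin k) K) = N ^ k := by
    rw [Fintype.card_congr (of (α := K) (m := ι) (n := Fin k)).symm, Fintype.card_fun,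
      Fintype.card_fun, Fintype.card_fin, pow_right_comm]
  have hbad (v : Fin k → K) (hv : v ≠ 0) : #(bad v) * N = #S * N ^ k := by
    have h := (mulVec.addMonoidHomLeft v).card_filter_mem_mul_card_of_surjective
      (mulVec_surjective_of_ne_zero hv) S
    rwa [Fintype.card_fun, hcard] at h
  have hunion : #((univ.erase 0).biUnion bad) * N < N ^ k * N := by
    calc #((univ.erase 0).biUnion bad) * N ≤ (∑ v ∈ univ.erase 0, #(bad v)) * N :=
          Nat.mul_le_mul_right _ card_biUnion_le
      _ = (Fintype.card K ^ k - 1) * #S * N ^ k := by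
          rw [sum_mul, sum_congr rfl fun v hv => hbad v (ne_of_mem_erase hv), sum_const,
            card_erase_of_mem (mem_univ _), card_univ, Fintype.card_fun, Fintype.card_fin,
            smul_eq_mul, mul_assoc]
      _ < N * N ^ k := Nat.mul_lt_mul_of_pos_right hS (by positivity)
      _ = N ^ k * N := mul_comm _ _
  obtain ⟨W, -, hW⟩ := exists_mem_notMem_of_card_lt_card
    (s := (univ.erase 0).biUnion bad) (t := univ)
    (by rw [card_univ, hcard]; exact Nat.lt_of_mul_lt_mul_right hunion)
  have hWv (v : Fin k → K) (hv : v ≠ 0) : W *ᵥ v ∉ S := fun hS =>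
    hW (mem_biUnion.2 ⟨v, mem_erase.2 ⟨hv, mem_univ v⟩, mem_filter.2 ⟨mem_univ W, hS⟩⟩)
  have hinj : Function.Injective W.mulVecLin := by
    rw [← LinearMap.ker_eq_bot, ker_mulVecLin_eq_bot_iff]
    by_contra! ⟨v, hv0, hv⟩
    exact hWv v hv (hv0 ▸ h0)
  refine ⟨LinearMap.range W.mulVecLin, by simp [LinearMap.finrank_range_of_inj hinj], ?_⟩
  rintro _ ⟨v, rfl⟩ hc
  exact hWv v (by rintro rfl; simp at hc)

theorem card_filter_eq_zero_add_hammingNorm {ι α : Type*} [Fintype ι] [Zero α] [DecidableEq α]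
    (x : ι → α) : #{i | x i = 0} + hammingNorm x = Fintype.card ι :=
  card_filter_add_card_filter_not _

theorem card_hammingNorm_le_mul_rpow_le {ι α : Type*} [Fintype ι] [DecidableEq ι] [Fintype α]
    [Zero α] [DecidableEq α] (D : ℝ) {t : ℝ} (ht : 1 ≤ t) :
    #{x : ι → α | (hammingNorm x : ℝ) ≤ D} * t ^ (Fintype.card ι - D)
      ≤ (t + Fintype.card α - 1) ^ Fintype.card ι := by
  have hweight (x : ι → α) : t ^ #{i | x i = 0} = ∏ i, if x i = 0 then t else 1 := by
    rw [prod_ite, prod_const, prod_const_one, mul_one]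
  calc (#{x : ι → α | (hammingNorm x : ℝ) ≤ D} : ℝ) * t ^ (Fintype.card ι - D)
      = ∑ x ∈ {x : ι → α | (hammingNorm x : ℝ) ≤ D}, t ^ (Fintype.card ι - D) := by
        rw [sum_const, nsmul_eq_mul]
    _ ≤ ∑ x ∈ {x : ι → α | (hammingNorm x : ℝ) ≤ D}, t ^ #{i | x i = 0} := by
        refine sum_le_sum fun x hx => ?_
        rw [← rpow_natCast, ← card_filter_eq_zero_add_hammingNorm x, Nat.cast_add]
        exact rpow_le_rpow_of_exponent_le ht (by linarith [(mem_filter.1 hx).2])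
    _ ≤ ∑ x : ι → α, t ^ #{i | x i = 0} :=
        sum_le_sum_of_subset_of_nonneg (filter_subset _ _) fun _ _ _ => by positivity
    _ = ∏ _i : ι, ∑ y : α, if y = 0 then t else 1 := by
        simp only [hweight, Fintype.prod_sum]
    _ = (t + Fintype.card α - 1) ^ Fintype.card ι := by
        rw [prod_const, card_univ, sum_ite, sum_const, sum_const, filter_eq', if_pos (mem_univ _),
          filter_ne', card_singleton, card_erase_of_mem (mem_univ _), card_univ, one_smul,
          nsmul_eq_mul, mul_one, Nat.cast_sub Fintype.card_pos]
        ring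

theorem exists_submodule_finrank_eq_lt_hammingNorm {K ι : Type*} [Field K] [Fintype K]
    [DecidableEq K] [Fintype ι] [DecidableEq ι] (k : ℕ) {D t : ℝ} (hD : 0 ≤ D)
    (ht : 1 ≤ t)
    (h : (Fintype.card K : ℝ) ^ k * (t + Fintype.card K - 1) ^ Fintype.card ι
      ≤ (Fintype.card K : ℝ) ^ Fintype.card ι * t ^ (Fintype.card ι - D)) :
    ∃ C : Submodule K (ι → K), Module.finrank K C = k ∧
      ∀ c ∈ C, c ≠ 0 → D < hammingNorm c := by
  set S : Finset (ι → K) := {x | (hammingNorm x : ℝ) ≤ D}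
  have h0 : 0 ∈ S := by simp [S, hD]
  have hball := card_hammingNorm_le_mul_rpow_le (ι := ι) (α := K) D ht
  have htD : 0 < t ^ (Fintype.card ι - D) := rpow_pos_of_pos (by linarith) _
  have hS : ((Fintype.card K ^ k - 1 : ℕ) : ℝ) * #S
      < (Fintype.card K : ℝ) ^ Fintype.card ι := by
    rw [Nat.cast_sub (Nat.one_le_pow _ _ Fintype.card_pos), Nat.cast_pow, Nat.cast_one]
    calc ((Fintype.card K : ℝ) ^ k - 1) * #S < (Fintype.card K : ℝ) ^ k * #S := by
          gcongr
          · exact_mod_cast card_pos.2 ⟨0, h0⟩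
          · linarith
      _ ≤ (Fintype.card K : ℝ) ^ Fintype.card ι := by
          refine le_of_mul_le_mul_right ?_ htD
          rw [mul_assoc]
          exact (mul_le_mul_of_nonneg_left hball (by positivity)).trans h
  obtain ⟨C, hC, hCS⟩ := exists_submodule_finrank_eq_forall_notMem k S h0 (by exact_mod_cast hS)
  refine ⟨C, hC, fun c hc hc0 => lt_of_not_ge fun hle => ?_⟩
  exact hCS c hc hc0 (mem_filter.2 ⟨mem_univ _, hle⟩)

theorem Real.log_le_sqrt {x : ℝ} (hx : 0 ≤ x) : log x ≤ √x := by
  rcases hx.eq_or_lt with rfl | hx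
  · simp
  have h := log_le_sub_one_of_pos (show 0 < √x / 2 by positivity)
  rw [log_div (by positivity) two_ne_zero, log_sqrt hx.le] at h
  linarith [log_two_lt_d9]

theorem mul_log_one_add_div_add_le {q r a u : ℝ} (hq : 0 ≤ q) (hr : 0 < r) (ha : 0 < a)
    (hu0 : 0 ≤ u) (hu1 : u ≤ 1) (hur : u * a ≤ r) :
    q * log (1 + u / r) + u * q / a ≤ (q / r + 2 * q / a) * log (1 + u) := by
  have hlog_upper : log (1 + u / r) ≤ u / r := by
    linarith [log_le_sub_one_of_pos (show 0 < 1 + u / r by positivity)]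
  have hqur : q * u / r ≤ q / a := by
    rw [div_le_div_iff₀ hr ha]; nlinarith
  calc q * log (1 + u / r) + u * q / a
      ≤ q * (u / r) + u / (u + 2) * (4 * q / a - q * u / r) := by
        gcongr
        calc u * q / a = u / 3 * (3 * q / a) := by ring
          _ ≤ u / (u + 2) * (3 * q / a) := by gcongr; linarith
          _ ≤ u / (u + 2) * (4 * q / a - q * u / r) := by
            gcongr; linarith [show 4 * q / a = 3 * q / a + q / a by ring]
    _ = (q / r + 2 * q / a) * (2 * u / (u + 2)) := by field_simp; ring
    _ ≤ (q / r + 2 * q / a) * log (1 + u) := by gcongr; exact le_log_one_add_of_nonneg hu0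

theorem mul_log_le_min_mul_div {q r k : ℕ} {a : ℝ} (hr : 0 < r) (hrq : r ≤ q) (ha : 0 < a)
    (hk : k * a ≤ √q) : k * log r ≤ min 1 (r / a) * q / a := by
  have hsq : √(q : ℝ) * √q = q := mul_self_sqrt q.cast_nonneg
  rcases min_cases 1 ((r : ℝ) / a) with ⟨hmin, -⟩ | ⟨hmin, -⟩ <;> rw [hmin]
  · calc k * log r ≤ k * √q := by
          gcongr
          exact (log_le_log (by positivity) (by exact_mod_cast hrq)).trans
            (log_le_sqrt q.cast_nonneg)
      _ = k * a * √q / a := by field_simp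
      _ ≤ √q * √q / a := by gcongr
      _ = 1 * q / a := by rw [hsq, one_mul]
  · have hk2 : (k : ℝ) ^ 2 * a ^ 2 ≤ q := by
      rw [← mul_pow, ← hsq, ← sq]; gcongr
    calc k * log r ≤ k ^ 2 * r := by
          gcongr
          · exact_mod_cast Nat.le_self_pow two_ne_zero k
          · exact log_le_self (by positivity)
      _ = k ^ 2 * a ^ 2 * r / a ^ 2 := by field_simp
      _ ≤ q * r / a ^ 2 := by gcongr
      _ = r / a * q / a := by ring

theorem exists_one_le_pow_mul_pow_le_pow_mul_rpow {q r k : ℕ} {a : ℝ} (hr : 0 < r)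
    (hrq : r ≤ q) (ha : 0 < a) (hk : k * a ≤ √q) :
    ∃ t : ℝ, 1 ≤ t ∧
      (r : ℝ) ^ k * (t + r - 1) ^ q ≤ (r : ℝ) ^ q * t ^ ((q : ℝ) / r + 2 * q / a) := by
  set u := min 1 ((r : ℝ) / a)
  have hu0 : 0 ≤ u := le_min zero_le_one (by positivity)
  have hr' : (0 : ℝ) < r := by exact_mod_cast hr
  refine ⟨1 + u, by linarith, ?_⟩
  have hsplit : 1 + u + r - 1 = r * (1 + u / r) := by field_simp; ring
  rw [hsplit, ← log_le_log_iff (by positivity) (by positivity), log_mul (by positivity)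
    (by positivity), log_mul (by positivity) (by positivity), log_pow, log_pow,
    log_mul (by positivity) (by positivity), log_pow, log_rpow (by positivity)]
  have hur : u * a ≤ r := (mul_le_mul_of_nonneg_right (min_le_right _ _) ha.le).trans
    (div_mul_cancel₀ _ ha.ne').le
  linarith [mul_log_one_add_div_add_le (q := q) q.cast_nonneg hr' ha hu0 (min_le_left _ _) hur,
    mul_log_le_min_mul_div hr hrq ha hk]

theorem main_shadow_code_exists_general
    (ε : ℝ) (hε : ε ∈ Set.Ioo (0 : ℝ) (1 / 2))
    (q r : ℕ)
    (hr : r.Prime) (hdvd : r ∣ q - 1)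
    (hq : (q : ℝ) > 6 ^ (1 / ε)) :
    ∃ C : Submodule (ZMod r) (Fin q → ZMod r),
      Module.finrank (ZMod r) C = ⌊(q : ℝ) ^ ((1 : ℝ) / 2 - ε)⌋₊
      ∧ ∀ c ∈ C, ∀ c' ∈ C, c ≠ c' →
          ((r : ℝ) - 1) * q / r - 2 * (q : ℝ) ^ ((1 : ℝ) - ε)
            ≤ (hammingDist c c' : ℝ) := by
  obtain ⟨hε0, -⟩ := hε
  have := Fact.mk hr
  have hq0 : (0 : ℝ) < q := lt_of_le_of_lt (by positivity) hq
  set a := (q : ℝ) ^ ε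
  have ha : 6 < a := (rpow_inv_lt_iff_of_pos (by norm_num) hq0.le hε0).1 (by rwa [one_div] at hq)
  have hrq : r ≤ q := by
    have hq1 : 1 < q := by exact_mod_cast (one_le_rpow (by norm_num) (by positivity)).trans_lt hq
    exact (Nat.le_of_dvd (by omega) hdvd).trans (Nat.sub_le q 1)
  set k := ⌊(q : ℝ) ^ ((1 : ℝ) / 2 - ε)⌋₊
  have hk : k * a ≤ √q := by
    rw [← le_div_iff₀ (by positivity), sqrt_eq_rpow, ← rpow_sub hq0]
    exact Nat.floor_le (by positivity)
  obtain ⟨t, ht, hbound⟩ :=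
    exists_one_le_pow_mul_pow_le_pow_mul_rpow hr.pos hrq (by positivity) hk
  set D := ((r : ℝ) - 1) * q / r - 2 * (q : ℝ) ^ ((1 : ℝ) - ε)
  have hD : (q : ℝ) - D = q / r + 2 * q / a := by
    have hqa : (q : ℝ) ^ ((1 : ℝ) - ε) = q / a := by rw [rpow_sub hq0, rpow_one]
    have hr0 : (r : ℝ) ≠ 0 := by exact_mod_cast hr.ne_zero
    simp only [D, hqa]; field_simp; ring
  have hD0 : 0 ≤ D := by
    have h1 : (q : ℝ) / r ≤ q / 2 :=
      div_le_div_of_nonneg_left hq0.le (by norm_num) (by exact_mod_cast hr.two_le)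
    have h2 : 2 * (q : ℝ) / a ≤ 2 * q / 6 :=
      div_le_div_of_nonneg_left (by positivity) (by norm_num) ha.le
    linarith
  obtain ⟨C, hC, hdist⟩ := exists_submodule_finrank_eq_lt_hammingNorm (K := ZMod r)
    (ι := Fin q) k hD0 ht (by simpa [ZMod.card, hD] using hbound)
  refine ⟨C, hC, fun c hc c' hc' hne => ?_⟩
  rw [hammingDist_eq_hammingNorm]
  exact (hdist _ (C.add_mem (C.neg_mem hc) hc') fun h => hne (neg_add_eq_zero.1 h)).le

/-- **Main theorem.** For any prime power `q ≥ 3`, prime `r ∣ q−1`,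
`ε ∈ (0,1/2)` and `q > 6^{1/ε}`, there is an `F_r`-linear code of length `q`,
dimension `⌊q^{1/2−ε}⌋`, and minimum distance at least `(r−1)q/r − 2q^{1−ε}`. -/
theorem main_shadow_code_exists
    (ε : ℝ) (hε : ε ∈ Set.Ioo (0 : ℝ) (1 / 2))
    (q r : ℕ) (hq3 : 3 ≤ q) (hpp : ∃ p k : ℕ, p.Prime ∧ 0 < k ∧ q = p ^ k)
    (hr : r.Prime) (hdvd : r ∣ q - 1)
    (hq : (q : ℝ) > 6 ^ (1 / ε)) :
    ∃ C : Submodule (ZMod r) (Fin q → ZMod r),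
      Module.finrank (ZMod r) C = ⌊(q : ℝ) ^ ((1 : ℝ) / 2 - ε)⌋₊
      ∧ ∀ c ∈ C, ∀ c' ∈ C, c ≠ c' →
          ((r : ℝ) - 1) * q / r - 2 * (q : ℝ) ^ ((1 : ℝ) - ε)
            ≤ (hammingDist c c' : ℝ) :=
  main_shadow_code_exists_general ε hε q r hr hdvd hq
end

section
/- Let ε ∈ (0,1/2). There is a constant C(ε) = 6^{1/ε} such that for any odd prime power q ≥ C(ε), there exists an F_2-linear code of length q, dimension ⌊q^{1/2−ε}⌋, and minimum distance at least q/2 − 2q^{1−ε}. -/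
/-!
Gilbert–Varshamov: a binary linear code of dimension `k` and minimum distance `d` exists as soon
as `2 ^ k * ∑ i < d, (q choose i) ≤ 2 ^ q`, because while the balls of radius `d - 1` around the
current code do not cover `𝔽₂ ^ q`, a word outside all of them extends the code by one dimension
without creating words of weight `< d`. The Chernoff bound
`∑ i < q / 2 - t, (q choose i) ≤ 2 ^ q * exp (-2 t² / q)` with `t = 2 q ^ (1 - ε)` supplies the
factor `exp (-8 q ^ (1 - 2ε))`, which beats `2 ^ k ≤ exp (q ^ (1/2 - ε))`.
-/

open Finset Module Real

theorem le_hammingNorm_of_mem_sup_span_singleton {K ι : Type*} [Field K] [DecidableEq K]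
    [Fintype ι] {W : Submodule K (ι → K)} {d : ℕ} (hW : ∀ w ∈ W, w ≠ 0 → d ≤ hammingNorm w)
    {v : ι → K} (hv : ∀ w ∈ W, d ≤ hammingDist v w) {z : ι → K} (hz : z ∈ W ⊔ K ∙ v)
    (hz0 : z ≠ 0) : d ≤ hammingNorm z := by
  obtain ⟨w, hw, _, ha, rfl⟩ := Submodule.mem_sup.1 hz
  obtain ⟨a, rfl⟩ := Submodule.mem_span_singleton.1 ha
  rcases eq_or_ne a 0 with rfl | ha0
  · simp only [zero_smul, add_zero] at hz0 ⊢
    exact hW w hw hz0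
  · have hreg : ∀ _ : ι, IsSMulRegular K a⁻¹ := fun _ ↦ smul_right_injective K (inv_ne_zero ha0)
    calc d ≤ hammingDist v (-(a⁻¹ • w)) := hv _ (W.neg_mem (W.smul_mem _ hw))
      _ = hammingNorm (w + a • v) := by
        rw [← hammingNorm_smul hreg, hammingDist_comm, hammingDist_eq_hammingNorm, neg_neg,
          smul_add, smul_smul, inv_mul_cancel₀ ha0, one_smul]

section Binary

variable {ι : Type*} [Fintype ι] [DecidableEq ι]

theorem card_filter_hammingDist_lt_le (w : ι → ZMod 2) (d : ℕ) :
    #{v | hammingDist v w < d} ≤ ∑ i ∈ range d, (Fintype.card ι).choose i := by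
  -- over `ZMod 2` a word is determined by the set of positions where it differs from `w`
  have hinj : Function.Injective (fun v : ι → ZMod 2 ↦ ({j | v j ≠ w j} : Finset ι)) := by
    intro v v' h
    funext j
    have hj := congrArg (j ∈ ·) h
    simp only [mem_filter, mem_univ, true_and, eq_iff_iff] at hj
    revert hj
    generalize v j = a; generalize v' j = b; generalize w j = c
    revert a b c; decide
  calc #{v | hammingDist v w < d}
      ≤ #((range d).biUnion fun i ↦ powersetCard i (univ : Finset ι)) := by
        refine card_le_card_of_injOn _ (fun v hv ↦ ?_) hinj.injOn
        exact mem_biUnion.2 ⟨_, mem_range.2 (mem_filter.1 hv).2,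
          mem_powersetCard.2 ⟨subset_univ _, rfl⟩⟩
    _ ≤ ∑ i ∈ range d, #(powersetCard i (univ : Finset ι)) := card_biUnion_le
    _ = ∑ i ∈ range d, (Fintype.card ι).choose i := by simp only [card_powersetCard, card_univ]

theorem exists_forall_le_hammingDist_of_card_mul_lt {S : Finset (ι → ZMod 2)} {d : ℕ}
    (hS : #S * ∑ i ∈ range d, (Fintype.card ι).choose i < 2 ^ Fintype.card ι) :
    ∃ v : ι → ZMod 2, ∀ w ∈ S, d ≤ hammingDist v w := by
  by_contra! hcover
  refine hS.not_ge ?_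
  calc 2 ^ Fintype.card ι = #(univ : Finset (ι → ZMod 2)) := by simp
    _ ≤ #(S.biUnion fun w ↦ {v | hammingDist v w < d}) :=
        card_le_card fun v _ ↦ by simpa using hcover v
    _ ≤ ∑ w ∈ S, #{v | hammingDist v w < d} := card_biUnion_le
    _ ≤ #S * ∑ i ∈ range d, (Fintype.card ι).choose i :=
        (sum_le_card_nsmul _ _ _ fun w _ ↦ card_filter_hammingDist_lt_le w d).trans_eq
          (smul_eq_mul _ _)

theorem exists_finrank_eq_forall_le_hammingNorm {k d : ℕ} (hd : 0 < d)
    (h : 2 ^ k * ∑ i ∈ range d, (Fintype.card ι).choose i ≤ 2 ^ Fintype.card ι) :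
    ∃ W : Submodule (ZMod 2) (ι → ZMod 2),
      finrank (ZMod 2) W = k ∧ ∀ w ∈ W, w ≠ 0 → d ≤ hammingNorm w := by
  induction k with
  | zero => exact ⟨⊥, finrank_bot .., fun w hw hw0 ↦ (hw0 ((Submodule.mem_bot _).1 hw)).elim⟩
  | succ k ih =>
    obtain ⟨W, hWk, hW⟩ := ih (le_trans (by gcongr <;> omega) h)
    classical
    have hcard : #{w | w ∈ W} = 2 ^ k := by
      rw [← Fintype.card_subtype, ← Nat.card_eq_fintype_card,
        natCard_eq_pow_finrank (K := ZMod 2), Nat.card_zmod, hWk]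
    have hfew : #{w | w ∈ W} * ∑ i ∈ range d, (Fintype.card ι).choose i
        < 2 ^ Fintype.card ι := by
      rw [hcard]
      rw [pow_succ] at h
      nlinarith [Nat.one_le_two_pow (n := Fintype.card ι)]
    obtain ⟨v, hvS⟩ := exists_forall_le_hammingDist_of_card_mul_lt hfew
    have hv : ∀ w ∈ W, d ≤ hammingDist v w := fun w hw ↦ hvS w (by simpa using hw)
    have hvW : v ∉ W := fun hvW ↦ by simpa using (hv v hvW).trans_lt' hd
    exact ⟨W ⊔ ZMod 2 ∙ v, by rw [Submodule.finrank_sup_span_singleton hvW, hWk],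
      fun z hz hz0 ↦ le_hammingNorm_of_mem_sup_span_singleton hW hv hz hz0⟩

end Binary

section BinomialTail

theorem sum_range_choose_mul_pow_le_one_add_pow {n m : ℕ} (hm : m ≤ n) {x : ℝ} (hx0 : 0 ≤ x)
    (hx1 : x ≤ 1) : (∑ i ∈ range (m + 1), (n.choose i : ℝ)) * x ^ m ≤ (1 + x) ^ n := by
  rw [sum_mul, add_comm 1 x, add_pow]
  calc ∑ i ∈ range (m + 1), (n.choose i : ℝ) * x ^ m
      ≤ ∑ i ∈ range (m + 1), x ^ i * 1 ^ (n - i) * n.choose i := sum_le_sum fun i hi ↦ by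
        rw [one_pow, mul_one, mul_comm (x ^ i)]
        exact mul_le_mul_of_nonneg_left
          (pow_le_pow_of_le_one hx0 hx1 (Nat.lt_succ_iff.1 (mem_range.1 hi))) (Nat.cast_nonneg _)
    _ ≤ ∑ i ∈ range (n + 1), x ^ i * 1 ^ (n - i) * n.choose i :=
        sum_le_sum_of_subset_of_nonneg (range_subset_range.2 (by omega)) fun i _ _ ↦ by positivity

-- `1 + e^{-y} = 2 e^{-y/2} cosh (y/2)`
theorem one_add_exp_neg_le (y : ℝ) : 1 + exp (-y) ≤ 2 * exp (-(y / 2) + y ^ 2 / 8) := by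
  have hcosh := cosh_le_exp_half_sq (y / 2)
  rw [cosh_eq] at hcosh
  have hfactor : 1 + exp (-y) = exp (-(y / 2)) * (exp (y / 2) + exp (-(y / 2))) := by
    rw [mul_add, ← exp_add, ← exp_add, neg_add_cancel, exp_zero, ← neg_add, add_halves]
  rw [hfactor, exp_add, show y ^ 2 / 8 = (y / 2) ^ 2 / 2 by ring]
  nlinarith [exp_pos (-(y / 2))]

theorem sum_range_choose_le_two_pow_mul_exp {n m : ℕ} {t : ℝ} (ht : 0 ≤ t)
    (hmt : m + t ≤ n / 2) :
    ∑ i ∈ range (m + 1), (n.choose i : ℝ) ≤ 2 ^ n * exp (-(2 * t ^ 2 / n)) := by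
  set y := 4 * t / n
  have hy : 0 ≤ y := by positivity
  have hm : m ≤ n := by exact_mod_cast (by linarith : (m : ℝ) ≤ n)
  have hbound := sum_range_choose_mul_pow_le_one_add_pow hm (exp_pos (-y)).le
    (exp_le_one_iff.2 (neg_nonpos.2 hy))
  have hpow : (1 + exp (-y)) ^ n ≤ 2 ^ n * exp (n * (-(y / 2) + y ^ 2 / 8)) :=
    calc _ ≤ (2 * exp (-(y / 2) + y ^ 2 / 8)) ^ n :=
          pow_le_pow_left₀ (by positivity) (one_add_exp_neg_le y) n
      _ = _ := by rw [mul_pow, ← exp_nat_mul]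
  -- `y = 4t/n` minimises the exponent
  have hexp : n * (-(y / 2) + y ^ 2 / 8) + m * y ≤ -(2 * t ^ 2 / n) := by
    rcases n.eq_zero_or_pos with rfl | hn
    · simp [y]
    · have hmy : m * y ≤ (n / 2 - t) * y := mul_le_mul_of_nonneg_right (by linarith) hy
      have hid : n * (-(y / 2) + y ^ 2 / 8) + (n / 2 - t) * y = -(2 * t ^ 2 / n) := by
        simp only [y]; field_simp; ring
      linarith
  calc ∑ i ∈ range (m + 1), (n.choose i : ℝ)
      = (∑ i ∈ range (m + 1), (n.choose i : ℝ)) * exp (-y) ^ m * exp (m * y) := by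
        rw [← exp_nat_mul, mul_assoc, ← exp_add, mul_neg, neg_add_cancel, exp_zero, mul_one]
    _ ≤ 2 ^ n * exp (n * (-(y / 2) + y ^ 2 / 8)) * exp (m * y) :=
        mul_le_mul_of_nonneg_right (hbound.trans hpow) (exp_pos _).le
    _ ≤ 2 ^ n * exp (-(2 * t ^ 2 / n)) := by
        rw [mul_assoc, ← exp_add]; gcongr

theorem sum_range_ceil_choose_le_two_pow_mul_exp (n : ℕ) {t : ℝ} (ht : 0 ≤ t) :
    ∑ i ∈ range ⌈(n : ℝ) / 2 - t⌉₊, (n.choose i : ℝ) ≤ 2 ^ n * exp (-(2 * t ^ 2 / n)) := by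
  cases hd : ⌈(n : ℝ) / 2 - t⌉₊ with
  | zero => simpa using by positivity
  | succ m =>
    have hm : (m : ℝ) < n / 2 - t := Nat.lt_ceil.1 (hd ▸ Nat.lt_succ_self m)
    exact sum_range_choose_le_two_pow_mul_exp ht (by linarith)

end BinomialTail

theorem two_pow_mul_sum_range_choose_le {ε : ℝ} (hε : ε ≤ 1 / 2) {q : ℕ} (hq : 1 ≤ q) :
    2 ^ ⌊(q : ℝ) ^ ((1 : ℝ) / 2 - ε)⌋₊ *
      ∑ i ∈ range ⌈(q : ℝ) / 2 - 2 * (q : ℝ) ^ ((1 : ℝ) - ε)⌉₊, q.choose i ≤ 2 ^ q := by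
  set k := ⌊(q : ℝ) ^ ((1 : ℝ) / 2 - ε)⌋₊
  set T := 2 * (q : ℝ) ^ ((1 : ℝ) - ε)
  have hq' : (1 : ℝ) ≤ q := by exact_mod_cast hq
  have hsum := sum_range_ceil_choose_le_two_pow_mul_exp q (t := T) (by positivity)
  have hkq : (k : ℝ) * q ≤ 2 * T ^ 2 := by
    have hexp : (q : ℝ) ^ ((1 : ℝ) / 2 - ε) * q ≤ ((q : ℝ) ^ ((1 : ℝ) - ε)) ^ 2 := by
      rw [← rpow_add_one (by positivity), ← rpow_natCast, ← rpow_mul (by positivity)]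
      exact rpow_le_rpow_of_exponent_le hq' (by push_cast; linarith)
    have hk : (k : ℝ) ≤ (q : ℝ) ^ ((1 : ℝ) / 2 - ε) := Nat.floor_le (by positivity)
    nlinarith [rpow_nonneg (Nat.cast_nonneg q) ((1 : ℝ) - ε)]
  have hk : (2 : ℝ) ^ k ≤ exp (2 * T ^ 2 / q) :=
    calc (2 : ℝ) ^ k ≤ exp 1 ^ k := by gcongr; linarith [add_one_le_exp (1 : ℝ)]
      _ = exp k := by rw [← exp_nat_mul, mul_one]
      _ ≤ exp (2 * T ^ 2 / q) := exp_le_exp.2 ((le_div_iff₀ (by positivity)).2 hkq)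
  have hreal : (2 : ℝ) ^ k * ∑ i ∈ range ⌈(q : ℝ) / 2 - T⌉₊, (q.choose i : ℝ) ≤ 2 ^ q :=
    calc _ ≤ exp (2 * T ^ 2 / q) * (2 ^ q * exp (-(2 * T ^ 2 / q))) :=
          mul_le_mul hk hsum (by positivity) (by positivity)
      _ = 2 ^ q := by rw [mul_left_comm, ← exp_add, add_neg_cancel, exp_zero, mul_one]
  exact_mod_cast hreal

theorem binary_shadow_code_exists_general
    (ε : ℝ) (hε : ε ∈ Set.Ioo (0 : ℝ) (1 / 2))
    (q : ℕ) (hq : (q : ℝ) ≥ 6 ^ (1 / ε)) :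
    ∃ C : Submodule (ZMod 2) (Fin q → ZMod 2),
      Module.finrank (ZMod 2) C = ⌊(q : ℝ) ^ ((1 : ℝ) / 2 - ε)⌋₊
      ∧ ∀ c ∈ C, ∀ c' ∈ C, c ≠ c' →
          (q : ℝ) / 2 - 2 * (q : ℝ) ^ ((1 : ℝ) - ε) ≤ (hammingDist c c' : ℝ) := by
  obtain ⟨hε0, hε2⟩ := hε
  have hqε : 6 ≤ (q : ℝ) ^ ε :=
    (rpow_inv_le_iff_of_pos (by norm_num) q.cast_nonneg hε0).1 (by simpa [one_div] using hq)
  have hq1 : 1 ≤ q := Nat.one_le_iff_ne_zero.2 fun h ↦ by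
    norm_num [h, zero_rpow hε0.ne'] at hqε
  have hpos : 0 < (q : ℝ) / 2 - 2 * (q : ℝ) ^ ((1 : ℝ) - ε) := by
    have hsplit : (q : ℝ) ^ ((1 : ℝ) - ε) * (q : ℝ) ^ ε = q := by
      rw [← rpow_add (by positivity), sub_add_cancel, rpow_one]
    nlinarith [rpow_pos_of_pos (show (0 : ℝ) < q by positivity) ((1 : ℝ) - ε)]
  obtain ⟨C, hCk, hC⟩ := exists_finrank_eq_forall_le_hammingNorm (ι := Fin q)
    (Nat.ceil_pos.2 hpos)
    (by simpa only [Fintype.card_fin] using two_pow_mul_sum_range_choose_le hε2.le hq1)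
  refine ⟨C, hCk, fun c hc c' hc' hne ↦ ?_⟩
  have hdist := hC _ (C.sub_mem hc' hc) (sub_ne_zero.2 hne.symm)
  rw [← neg_add_eq_sub c c', ← hammingDist_eq_hammingNorm] at hdist
  exact (Nat.le_ceil _).trans (by exact_mod_cast hdist)

/-- **binary case.** For any `ε ∈ (0,1/2)` and any odd prime power
`q ≥ 6^{1/ε}`, there exists an `F_2`-linear code of length `q`, dimension
`⌊q^{1/2−ε}⌋`, and minimum distance at least `q/2 − 2q^{1−ε}`. -/
theorem binary_shadow_code_exists
    (ε : ℝ) (hε : ε ∈ Set.Ioo (0 : ℝ) (1 / 2))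
    (q : ℕ) (hodd : Odd q) (hpp : ∃ p k : ℕ, p.Prime ∧ 0 < k ∧ q = p ^ k)
    (hq : (q : ℝ) ≥ 6 ^ (1 / ε)) :
    ∃ C : Submodule (ZMod 2) (Fin q → ZMod 2),
      Module.finrank (ZMod 2) C = ⌊(q : ℝ) ^ ((1 : ℝ) / 2 - ε)⌋₊
      ∧ ∀ c ∈ C, ∀ c' ∈ C, c ≠ c' →
          (q : ℝ) / 2 - 2 * (q : ℝ) ^ ((1 : ℝ) - ε) ≤ (hammingDist c c' : ℝ) :=
  binary_shadow_code_exists_general ε hε q hq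
end
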